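/- arXiv:2511.15119 — 3 statements merged into one kernel-verified Lean document; each statement's English description precedes it below -/
import Mathlib

section
/- Let k₁, k₂, k₃ > 0 with k₁k₃ ≥ k₂², set q = √(k₁/k₃), U(δ,γ) = δ² + q²γ², z = δ + qγ, Π = z². Along the planar system δ' = (k₁/2)sin(2γ), γ' = -k₂γ - k₃·sinc(2γ)·δ, the time derivative of Π satisfies Π' ≤ -(3/2)k₂Π + 2k₁q·γ² + 2k₃q·δ²γ². -/
noncomputable def sinc (a : ℝ) : ℝ := if a = 0 then 1 else Real.sin a / a

lemma aux_sin_ge (x : ℝ) (hx : 0 ≤ x) : x - x ^ 3 / 6 ≤ Real.sin x := by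
  have hder : ∀ y : ℝ, HasDerivAt (fun y : ℝ => Real.sin y - y + y ^ 3 / 6)
      (Real.cos y - 1 + y ^ 2 / 2) y := by
    intro y
    have h1 : HasDerivAt (fun y : ℝ => Real.sin y - y + y ^ 3 / 6) _ y := ((Real.hasDerivAt_sin y).sub (hasDerivAt_id y)).add
      ((hasDerivAt_pow 3 y).div_const 6)
    convert h1 using 1
    ring
  have hmono : Monotone (fun y : ℝ => Real.sin y - y + y ^ 3 / 6) := by
    apply monotone_of_deriv_nonneg
    · exact fun y => ((hder y).differentiableAt)
    · intro y
      rw [(hder y).deriv]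
      nlinarith [Real.one_sub_sq_div_two_le_cos (x := y)]
  have := hmono hx
  simp at this
  linarith

lemma aux_sinc_ge (x : ℝ) : 1 - x ^ 2 / 6 ≤ sinc x := by
  unfold sinc
  split_ifs with h
  · nlinarith [sq_nonneg x]
  · rcases lt_or_gt_of_ne h with hneg | hpos
    · have hpos2 : 0 < -x := by linarith
      have h1 := aux_sin_ge (-x) hpos2.le
      rw [Real.sin_neg] at h1
      have hdd : Real.sin x / x = -Real.sin x / -x := by rw [neg_div_neg_eq]
      rw [hdd, le_div_iff₀ hpos2]
      nlinarith
    · have h1 := aux_sin_ge x hpos.le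
      rw [le_div_iff₀ hpos]
      nlinarith

lemma aux_sinc_le (x : ℝ) : sinc x ≤ 1 := by
  unfold sinc
  split_ifs with h
  · exact le_rfl
  · rcases lt_or_gt_of_ne h with hneg | hpos
    · rw [div_le_iff_of_neg hneg]
      have h1 := Real.abs_sin_le_abs (x := x)
      rw [abs_of_neg hneg] at h1
      have h2 := neg_abs_le (Real.sin x)
      linarith
    · rw [div_le_iff₀ hpos]
      have := Real.abs_sin_le_abs (x := x)
      rw [abs_of_pos hpos] at this
      calc Real.sin x ≤ |Real.sin x| := le_abs_self _
        _ ≤ x := this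
        _ = 1 * x := by ring

theorem stmt_9 (k₁ k₂ k₃ : ℝ) (hk₁ : 0 < k₁) (hk₂ : 0 < k₂) (hk₃ : 0 < k₃)
    (hgain : k₂ ^ 2 ≤ k₁ * k₃) (q : ℝ) (hq : q = Real.sqrt (k₁ / k₃))
    (δ γ : ℝ → ℝ) (t : ℝ)
    (hδ : HasDerivAt δ (k₁ / 2 * Real.sin (2 * γ t)) t)
    (hγ : HasDerivAt γ (-k₂ * γ t - k₃ * sinc (2 * γ t) * δ t) t) :
    ∀ u : ℝ, HasDerivAt (fun s => (δ s + q * γ s) ^ 2) u t →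
      u ≤ -(3 / 2) * k₂ * (δ t + q * γ t) ^ 2 + 2 * k₁ * q * (γ t) ^ 2
          + 2 * k₃ * q * (δ t) ^ 2 * (γ t) ^ 2 := by
  intro u hu
  set a := γ t with ha
  set b := δ t with hb
  set s := sinc (2 * a) with hs
  -- basic facts about q
  have hq0 : 0 < q := by
    rw [hq]; exact Real.sqrt_pos.2 (div_pos hk₁ hk₃)
  have hq2 : k₃ * q ^ 2 = k₁ := by
    rw [hq, Real.sq_sqrt (div_pos hk₁ hk₃).le]; field_simp
  have hK : k₂ ≤ q * k₃ := by
    nlinarith [mul_pos hq0 hk₃]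
  -- derivative computation
  have hz : HasDerivAt (fun y => δ y + q * γ y)
      (k₁ / 2 * Real.sin (2 * a) + q * (-k₂ * a - k₃ * s * b)) t :=
    hδ.add (hγ.const_mul q)
  have hP : HasDerivAt (fun y => (δ y + q * γ y) ^ 2)
      (2 * (b + q * a) ^ 1 * (k₁ / 2 * Real.sin (2 * a) + q * (-k₂ * a - k₃ * s * b))) t :=
    hz.pow 2
  have huval : u = 2 * (b + q * a) *
      (k₁ / 2 * Real.sin (2 * a) + q * (-k₂ * a - k₃ * s * b)) := by
    have := hu.unique hP
    rw [this]; ring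
  have hsin : Real.sin (2 * a) = 2 * a * s := by
    rw [hs]
    unfold sinc
    split_ifs with h
    · rw [h]; simp
    · field_simp
      exact (mul_div_cancel_left₀ _ (by intro h'; apply h; rw [h']; ring)).symm
  -- key identity
  have hid : u = -2 * k₂ * (b + q * a) ^ 2 + 2 * k₁ * q * (s * a ^ 2)
      + 2 * b ^ 2 * (k₂ - q * k₃ * s) + 2 * k₂ * (q * a * b) := by
    rw [huval, hsin]
    linear_combination (-2 * a * s * b) * hq2
  -- bounds
  have hsle : s ≤ 1 := aux_sinc_le _
  have hsge : 1 - (2 * a) ^ 2 / 6 ≤ s := aux_sinc_ge _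
  have E1 : 2 * k₁ * q * (s * a ^ 2) ≤ 2 * k₁ * q * a ^ 2 := by
    nlinarith [mul_nonneg (mul_pos hk₁ hq0).le
      (mul_nonneg (sub_nonneg.2 hsle) (sq_nonneg a))]
  have E2 : 2 * b ^ 2 * (k₂ - q * k₃ * s) ≤ 2 * k₃ * q * b ^ 2 * a ^ 2 := by
    have h0 : (0:ℝ) ≤ s + a ^ 2 - 1 := by nlinarith [sq_nonneg a]
    have key : k₂ - q * k₃ * s ≤ q * k₃ * a ^ 2 := by
      nlinarith [mul_nonneg (mul_pos hq0 hk₃).le h0]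
    nlinarith [mul_nonneg (sq_nonneg b) (sub_nonneg.2 key)]
  have E3 : 2 * k₂ * (q * a * b) ≤ k₂ / 2 * (b + q * a) ^ 2 := by
    nlinarith [sq_nonneg (b - q * a), hk₂.le]
  linarith [hid.le, E1, E2, E3]
end

section
/- Let k₁, k₂, k₃ > 0 with k₁k₃ ≥ k₂², set q = √(k₁/k₃), and define V(δ,γ) = k₃(1 + (2q² + U)/(2qk₂))·U + (δ + qγ)², with U = δ² + q²γ². Then the Lie derivative of V along the planar system δ' = (k₁/2)sin(2γ), γ' = -k₂γ - k₃·sinc(2γ)·δ satisfies V' ≤ -2k₁k₂γ² - (3/2)k₂(δ + qγ)² - 2k₁q·γ⁴; in particular V' < 0 whenever (δ,γ) ≠ (0,0). -/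
noncomputable def Ufun (q δ γ : ℝ) : ℝ := δ ^ 2 + q ^ 2 * γ ^ 2

noncomputable def Vfun (k₂ k₃ q δ γ : ℝ) : ℝ :=
  k₃ * (1 + (2 * q ^ 2 + Ufun q δ γ) / (2 * q * k₂)) * Ufun q δ γ + (δ + q * γ) ^ 2

lemma sin_eq_mul_sinc (a : ℝ) : Real.sin a = a * sinc a := by
  by_cases h : a = 0
  · simp [h, sinc]
  · rw [sinc, if_neg h]; field_simp

lemma sinc_le_one (a : ℝ) : sinc a ≤ 1 := by
  by_cases h : a = 0
  · simp [h, sinc]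
  · rw [sinc, if_neg h]
    have key : ∀ b : ℝ, 0 < b → Real.sin b / b ≤ 1 := fun b hb =>
      (div_le_one hb).mpr (Real.sin_lt hb).le
    rcases lt_or_gt_of_ne h with hlt | hgt
    · have := key (-a) (by linarith)
      rw [Real.sin_neg] at this
      rw [show Real.sin a / a = -Real.sin a / -a by rw [neg_div_neg_eq]]
      exact this
    · exact key a hgt

lemma sin_double_ge (y : ℝ) (hy : 0 < y) (hy1 : y ≤ 1) :
    2 * y - (2 * y) ^ 3 / 4 ≤ Real.sin (2 * y) := by
  have hs : y - y ^ 3 / 4 < Real.sin y := by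
    have := Real.sin_gt_sub_cube hy
    linarith [pow_pos hy 3]
  have hc := Real.one_sub_sq_div_two_le_cos (x := y)
  have hns : (0:ℝ) ≤ y - y ^ 3 / 4 := by nlinarith
  have hnc : (0:ℝ) ≤ 1 - y ^ 2 / 2 := by nlinarith
  have h1 : (y - y ^ 3 / 4) * (1 - y ^ 2 / 2) ≤ Real.sin y * Real.cos y :=
    mul_le_mul hs.le hc hnc (by nlinarith)
  rw [Real.sin_two_mul]
  nlinarith [pow_nonneg hy.le 3, pow_nonneg hy.le 5]

lemma sin_ge_sub_cube (x : ℝ) (hx : 0 < x) : x - x ^ 3 / 4 ≤ Real.sin x := by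
  rcases le_or_gt x 2 with h2 | h2
  · have := sin_double_ge (x / 2) (by linarith) (by linarith)
    have hx2 : 2 * (x / 2) = x := by ring
    rw [hx2] at this
    linarith
  · rcases lt_or_ge x Real.pi with hpi | hpi
    · have hs : 0 < Real.sin x := Real.sin_pos_of_pos_of_lt_pi hx hpi
      nlinarith [mul_pos (mul_pos (sub_pos.mpr h2) hx) (show (0:ℝ) < x + 2 by linarith)]
    · have h3 : (3:ℝ) ≤ x := le_trans (by linarith [Real.pi_gt_three]) hpi
      have := Real.neg_one_le_sin x
      nlinarith [mul_nonneg (mul_nonneg (show (0:ℝ) ≤ x - 3 by linarith) hx.le)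
        (show (0:ℝ) ≤ x + 3 by linarith)]

lemma sinc_ge (a : ℝ) : 1 - a ^ 2 / 4 ≤ sinc a := by
  by_cases h : a = 0
  · simp [h, sinc]
  · rw [sinc, if_neg h]
    have key : ∀ b : ℝ, 0 < b → 1 - b ^ 2 / 4 ≤ Real.sin b / b := by
      intro b hb
      rw [le_div_iff₀ hb]
      nlinarith [sin_ge_sub_cube b hb]
    rcases lt_or_gt_of_ne h with hlt | hgt
    · have := key (-a) (by linarith)
      rw [Real.sin_neg] at this
      have heq : Real.sin a / a = -Real.sin a / -a := by
        rw [neg_div_neg_eq]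
      rw [heq]
      simpa using this
    · exact key a hgt

set_option maxHeartbeats 1000000 in
theorem stmt_10 (k₁ k₂ k₃ : ℝ) (hk₁ : 0 < k₁) (hk₂ : 0 < k₂) (hk₃ : 0 < k₃)
    (hgain : k₂ ^ 2 ≤ k₁ * k₃) (q : ℝ) (hq : q = Real.sqrt (k₁ / k₃))
    (δ γ : ℝ → ℝ) (t : ℝ)
    (hδ : HasDerivAt δ (k₁ / 2 * Real.sin (2 * γ t)) t)
    (hγ : HasDerivAt γ (-k₂ * γ t - k₃ * sinc (2 * γ t) * δ t) t) :
    ∀ u : ℝ, HasDerivAt (fun s => Vfun k₂ k₃ q (δ s) (γ s)) u t →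
      u ≤ -2 * k₁ * k₂ * (γ t) ^ 2 - (3 / 2) * k₂ * (δ t + q * γ t) ^ 2
            - 2 * k₁ * q * (γ t) ^ 4 ∧
      ((δ t, γ t) ≠ (0, 0) → u < 0) := by
  intro u hu
  have hqpos : 0 < q := by
    rw [hq]; exact Real.sqrt_pos.mpr (div_pos hk₁ hk₃)
  have hq2 : k₃ * q ^ 2 = k₁ := by
    rw [hq, Real.sq_sqrt (div_pos hk₁ hk₃).le]
    field_simp
  have hk2q : k₂ ≤ k₃ * q := by
    have h2 : k₂ ^ 2 ≤ (k₃ * q) ^ 2 := by nlinarith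
    nlinarith [mul_pos hk₂ (mul_pos hk₃ hqpos), sq_nonneg (k₂ - k₃ * q), sq_nonneg (k₂ + k₃ * q)]
  -- derivative computation
  set dD : ℝ := k₁ / 2 * Real.sin (2 * γ t) with hdD
  set dG : ℝ := -k₂ * γ t - k₃ * sinc (2 * γ t) * δ t with hdG
  set dU : ℝ := (2 : ℕ) * δ t ^ 1 * dD + q ^ 2 * ((2 : ℕ) * γ t ^ 1 * dG) with hdU
  have hU : HasDerivAt (fun s => (δ s) ^ 2 + q ^ 2 * (γ s) ^ 2) dU t :=
    (hδ.pow 2).add ((hγ.pow 2).const_mul (q ^ 2))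
  have h1 : HasDerivAt
      (fun s => k₃ * (1 + (2 * q ^ 2 + ((δ s) ^ 2 + q ^ 2 * (γ s) ^ 2)) / (2 * q * k₂)))
      (k₃ * (dU / (2 * q * k₂))) t :=
    (((hU.const_add (2 * q ^ 2)).div_const (2 * q * k₂)).const_add 1).const_mul k₃
  have hV : HasDerivAt (fun s => Vfun k₂ k₃ q (δ s) (γ s))
      (k₃ * (dU / (2 * q * k₂)) * ((δ t) ^ 2 + q ^ 2 * (γ t) ^ 2)
        + k₃ * (1 + (2 * q ^ 2 + ((δ t) ^ 2 + q ^ 2 * (γ t) ^ 2)) / (2 * q * k₂)) * dU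
        + (2 : ℕ) * (δ t + q * γ t) ^ 1 * (dD + q * dG)) t := by
    have h2 := (h1.mul hU).add ((hδ.add (hγ.const_mul q)).pow 2)
    exact h2.congr_of_eventuallyEq (Filter.Eventually.of_forall fun s => by simp [Vfun, Ufun])
  have huu := hV.unique hu
  set S : ℝ := sinc (2 * γ t) with hS
  set D : ℝ := δ t
  set G : ℝ := γ t
  have hsin : Real.sin (2 * G) = 2 * G * S := by
    rw [sin_eq_mul_sinc]
  have hS1 : S ≤ 1 := sinc_le_one _
  have hS2 : 1 - G ^ 2 ≤ S := by
    have := sinc_ge (2 * G)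
    nlinarith [this]
  have hk₂' : (2 : ℝ) * q * k₂ ≠ 0 := by positivity
  have hueq : u = -2 * k₁ * k₂ * G ^ 2 - 2 * k₁ * q * G ^ 2 - 2 * q * k₃ * G ^ 2 * D ^ 2
      - 2 * k₁ * q * G ^ 4 - 2 * k₂ * q * G * D - 2 * k₂ * q ^ 2 * G ^ 2
      + 2 * q * k₃ * S * (q ^ 2 * G ^ 2 - D ^ 2) := by
    rw [← huu, hdU, hdD, hdG, hsin, ← hq2]
    field_simp
    ring
  have key : u ≤ -2 * k₁ * k₂ * G ^ 2 - (3 / 2) * k₂ * (D + q * G) ^ 2 - 2 * k₁ * q * G ^ 4 := by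
    rw [hueq, ← hq2]
    have t1 : 0 ≤ k₂ / 2 * (q * G - D) ^ 2 := by positivity
    have t2 : 0 ≤ 2 * k₃ * q ^ 3 * G ^ 2 * (1 - S) := by
      have : 0 ≤ 1 - S := by linarith
      positivity
    have t3 : 0 ≤ 2 * q * k₃ * D ^ 2 * (G ^ 2 + S - 1) := by
      have : 0 ≤ G ^ 2 + S - 1 := by linarith
      positivity
    have t4 : 0 ≤ 2 * D ^ 2 * (k₃ * q - k₂) := by
      have : 0 ≤ k₃ * q - k₂ := by linarith
      positivity
    nlinarith [t1, t2, t3, t4]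
  refine ⟨key, fun hne => ?_⟩
  have hne' : D ≠ 0 ∨ G ≠ 0 := by
    by_contra h
    push_neg at h
    exact hne (by simp [show D = 0 from h.1, show G = 0 from h.2])
  have hrhs : -2 * k₁ * k₂ * G ^ 2 - (3 / 2) * k₂ * (D + q * G) ^ 2 - 2 * k₁ * q * G ^ 4 < 0 := by
    by_cases hG : G = 0
    · have hD : D ≠ 0 := by tauto
      have : 0 < D ^ 2 := by positivity
      rw [hG]
      nlinarith
    · have : 0 < G ^ 2 := by positivity
      nlinarith [sq_nonneg (D + q * G), sq_nonneg (G ^ 2), mul_pos hk₁ hqpos, mul_pos hk₁ hk₂]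
  exact lt_of_le_of_lt key hrhs
end

section
/- Let k₁, k₂, k₃ > 0, q = √(k₁/k₃), and consider the planar system ζ' = -(k₁k₃/k₂)·sinc²(2γ)·ζ, γ' = -k₂γ - k₃·sinc(2γ)·ζ. Then the function V(ζ,γ) = ζ² + q²γ² has Lie derivative V' = -(k₁k₂/k₃)·[((k₃/k₂)sinc(2γ)ζ)² + γ² + ((k₃/k₂)sinc(2γ)ζ + γ)²], which is negative whenever (ζ,γ) ≠ (0,0). -/
/-!
Differentiating `V = ζ² + q²γ²` along the flow and using `q² = k₁/k₃` gives an expression in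
`a = (k₃/k₂) sinc(2γ) ζ` and `b = γ` that expands to `-(k₁k₂/k₃)(a² + b² + (a + b)²)`.
The bracket vanishes only when `a = b = 0`; and `b = γ = 0` forces `sinc(2γ) = 1`, so then `a = 0`
means `ζ = 0`.
-/

theorem sinc_zero : sinc 0 = 1 := if_pos rfl

theorem sq_add_sq_add_sq_add_pos {a b : ℝ} (h : a ≠ 0 ∨ b ≠ 0) :
    0 < a ^ 2 + b ^ 2 + (a + b) ^ 2 := by
  rcases h with ha | hb
  · have := sq_pos_of_ne_zero ha
    positivity
  · have := sq_pos_of_ne_zero hb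
    positivity

theorem lyapunov_derivative_eq (k₁ k₂ k₃ s z g : ℝ) (hk₂ : k₂ ≠ 0) (hk₃ : k₃ ≠ 0) :
    2 * z * (-(k₁ * k₃ / k₂) * s ^ 2 * z) + k₁ / k₃ * (2 * g * (-k₂ * g - k₃ * s * z)) =
      -(k₁ * k₂ / k₃) * ((k₃ / k₂ * s * z) ^ 2 + g ^ 2 + (k₃ / k₂ * s * z + g) ^ 2) := by
  field_simp
  ring

theorem sinc_mul_ne_zero_or_ne_zero {c z g : ℝ} (hc : c ≠ 0) (h : (z, g) ≠ (0, 0)) :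
    c * sinc (2 * g) * z ≠ 0 ∨ g ≠ 0 := by
  by_cases hg : g = 0
  · subst hg
    have hz : z ≠ 0 := fun hz => h (by rw [hz])
    left
    simpa [sinc_zero] using And.intro hc hz
  · exact Or.inr hg

theorem stmt_11 (k₁ k₂ k₃ : ℝ) (hk₁ : 0 < k₁) (hk₂ : 0 < k₂) (hk₃ : 0 < k₃)
    (q : ℝ) (hq : q = Real.sqrt (k₁ / k₃))
    (ζ γ : ℝ → ℝ) (t : ℝ)
    (hζ : HasDerivAt ζ (-(k₁ * k₃ / k₂) * (sinc (2 * γ t)) ^ 2 * ζ t) t)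
    (hγ : HasDerivAt γ (-k₂ * γ t - k₃ * sinc (2 * γ t) * ζ t) t) :
    ∀ u : ℝ, HasDerivAt (fun s => (ζ s) ^ 2 + q ^ 2 * (γ s) ^ 2) u t →
      u = -(k₁ * k₂ / k₃) *
            ((k₃ / k₂ * sinc (2 * γ t) * ζ t) ^ 2 + (γ t) ^ 2
              + (k₃ / k₂ * sinc (2 * γ t) * ζ t + γ t) ^ 2) ∧
      ((ζ t, γ t) ≠ (0, 0) → u < 0) := by
  intro u hu
  have hq2 : q ^ 2 = k₁ / k₃ := by rw [hq, Real.sq_sqrt (by positivity)]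
  have hV := (hζ.pow 2).add ((hγ.pow 2).const_mul (q ^ 2))
  have hu_eq : u = _ := hu.unique hV
  simp only [Nat.cast_ofNat, Nat.add_one_sub_one, pow_one, hq2] at hu_eq
  rw [lyapunov_derivative_eq k₁ k₂ k₃ _ _ _ hk₂.ne' hk₃.ne'] at hu_eq
  refine ⟨hu_eq, fun hne => ?_⟩
  have hbracket := sq_add_sq_add_sq_add_pos
    (sinc_mul_ne_zero_or_ne_zero (div_pos hk₃ hk₂).ne' hne)
  rw [hu_eq, neg_mul]
  exact neg_neg_of_pos (mul_pos (by positivity) hbracket)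
end
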